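/- arXiv:2010.10879 — 8 statements merged into one kernel-verified Lean document; each statement's English description precedes it below -/
import Mathlib

section
/- Let F be a field, L a 2×4 matrix over F of rank 2, and H a 3×4 matrix over F of rank 3. Then the row span of L is contained in the row span of H if and only if the four expressions ℓ₁₂h₁₃₄ − ℓ₁₃h₁₂₄ + ℓ₁₄h₁₂₃, ℓ₁₂h₂₃₄ − ℓ₂₃h₁₂₄ + ℓ₂₄h₁₂₃, ℓ₁₃h₂₃₄ − ℓ₂₃h₁₃₄ + ℓ₃₄h₁₂₃, and ℓ₁₄h₂₃₄ − ℓ₂₄h₁₃₄ + ℓ₃₄h₁₂₄ all vanish. -/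
/-!
The rows of `H` span exactly the kernel of the linear form `φ x = det [x; H]`, whose coefficients
are the signed maximal minors of `H`. Expanding the minors, the four expressions are the
coordinates of `φ(ℓ₁) ℓ₂ - φ(ℓ₂) ℓ₁`, where `ℓ₁, ℓ₂` are the rows of `L`. Since these rows are
independent, that vector vanishes iff `φ` kills both rows, i.e. iff the row span of `L` lies in
that of `H`.
-/

open Matrix

namespace Matrix

theorem linearIndependent_row_iff_rank_eq_card {K m n : Type*} [Field K] [Fintype m] [Fintype n]
    (A : Matrix m n K) : LinearIndependent K A.row ↔ A.rank = Fintype.card m := by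
  rw [linearIndependent_iff_card_eq_finrank_span, rank_eq_finrank_span_row, Set.finrank, eq_comm]

section Cofactor

variable {R : Type*} [CommRing R] {n : ℕ}

/-- For `n = 3` this is `(h₂₃₄, -h₁₃₄, h₁₂₄, -h₁₂₃)`. -/
def cofactorVec (A : Matrix (Fin n) (Fin (n + 1)) R) : Fin (n + 1) → R :=
  fun j => (-1) ^ (j : ℕ) * (A.submatrix id j.succAbove).det

theorem dotProduct_cofactorVec (A : Matrix (Fin n) (Fin (n + 1)) R) (x : Fin (n + 1) → R) :
    x ⬝ᵥ cofactorVec A = (of (Fin.cons x A)).det := by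
  rw [det_succ_row_zero, dotProduct]
  refine Finset.sum_congr rfl fun j _ => ?_
  exact (mul_left_comm _ _ _).trans (mul_assoc _ _ _).symm

theorem row_dotProduct_cofactorVec (A : Matrix (Fin n) (Fin (n + 1)) R) (i : Fin n) :
    A i ⬝ᵥ cofactorVec A = 0 := by
  rw [dotProduct_cofactorVec]
  exact det_zero_of_row_eq (Fin.succ_ne_zero i).symm rfl

end Cofactor

variable {K : Type*} [Field K] {n : ℕ}

theorem mem_span_row_iff_dotProduct_cofactorVec_eq_zero {A : Matrix (Fin n) (Fin (n + 1)) K}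
    (hA : LinearIndependent K A.row) (x : Fin (n + 1) → K) :
    x ∈ Submodule.span K (Set.range A.row) ↔ x ⬝ᵥ cofactorVec A = 0 := by
  -- `x ∉ span` iff the rows of `[x; A]` are independent iff `det [x; A] ≠ 0`
  rw [dotProduct_cofactorVec, ← not_iff_not, ← ne_eq, ← isUnit_iff_ne_zero,
    ← isUnit_iff_isUnit_det, ← linearIndependent_rows_iff_isUnit]
  exact (linearIndependent_finCons.trans (and_iff_right hA)).symm

theorem span_row_le_span_row_iff {m : Type*} (L : Matrix m (Fin (n + 1)) K)
    {A : Matrix (Fin n) (Fin (n + 1)) K} (hA : LinearIndependent K A.row) :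
    Submodule.span K (Set.range L.row) ≤ Submodule.span K (Set.range A.row) ↔
      ∀ i, L i ⬝ᵥ cofactorVec A = 0 := by
  simp only [Submodule.span_le, Set.range_subset_iff, SetLike.mem_coe,
    mem_span_row_iff_dotProduct_cofactorVec_eq_zero hA]
  rfl

end Matrix

theorem LinearIndependent.smul_sub_smul_eq_zero_iff {R M : Type*} [Ring R] [AddCommGroup M]
    [Module R M] {v : Fin 2 → M} (hv : LinearIndependent R v) {a b : R} :
    a • v 1 - b • v 0 = 0 ↔ a = 0 ∧ b = 0 := by
  refine ⟨fun h => ?_, fun ⟨ha, hb⟩ => by simp [ha, hb]⟩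
  have hab := Fintype.linearIndependent_iff.1 hv ![-b, a]
    (by simpa [Fin.sum_univ_two, neg_smul, sub_eq_neg_add] using h)
  exact ⟨by simpa using hab 1, by simpa using hab 0⟩

theorem plucker_expressions_eq_smul_sub_smul {R : Type*} [CommRing R]
    (L : Matrix (Fin 2) (Fin 4) R) (H : Matrix (Fin 3) (Fin 4) R) :
    ![(L.submatrix id ![0, 1]).det * (H.submatrix id ![0, 2, 3]).det
          - (L.submatrix id ![0, 2]).det * (H.submatrix id ![0, 1, 3]).det
          + (L.submatrix id ![0, 3]).det * (H.submatrix id ![0, 1, 2]).det,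
        (L.submatrix id ![0, 1]).det * (H.submatrix id ![1, 2, 3]).det
          - (L.submatrix id ![1, 2]).det * (H.submatrix id ![0, 1, 3]).det
          + (L.submatrix id ![1, 3]).det * (H.submatrix id ![0, 1, 2]).det,
        (L.submatrix id ![0, 2]).det * (H.submatrix id ![1, 2, 3]).det
          - (L.submatrix id ![1, 2]).det * (H.submatrix id ![0, 2, 3]).det
          + (L.submatrix id ![2, 3]).det * (H.submatrix id ![0, 1, 2]).det,
        (L.submatrix id ![0, 3]).det * (H.submatrix id ![1, 2, 3]).det
          - (L.submatrix id ![1, 3]).det * (H.submatrix id ![0, 2, 3]).det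
          + (L.submatrix id ![2, 3]).det * (H.submatrix id ![0, 1, 3]).det]
      = (L 0 ⬝ᵥ cofactorVec H) • L 1 - (L 1 ⬝ᵥ cofactorVec H) • L 0 := by
  ext j
  fin_cases j <;>
    simp [cofactorVec, dotProduct, Fin.sum_univ_four, det_fin_two, det_fin_three, Fin.succAbove] <;>
    ring

/-- Let `F` be a field, `L` a 2×4 matrix over `F` of rank 2, and
`H` a 3×4 matrix over `F` of rank 3.  Then the row span of `L` is contained in
the row span of `H` if and only if the four expressions
`ℓ₁₂h₁₃₄ − ℓ₁₃h₁₂₄ + ℓ₁₄h₁₂₃`, `ℓ₁₂h₂₃₄ − ℓ₂₃h₁₂₄ + ℓ₂₄h₁₂₃`,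
`ℓ₁₃h₂₃₄ − ℓ₂₃h₁₃₄ + ℓ₃₄h₁₂₃`, and `ℓ₁₄h₂₃₄ − ℓ₂₄h₁₃₄ + ℓ₃₄h₁₂₄` all vanish. -/
theorem line_in_plane_iff {F : Type*} [Field F] (L : Matrix (Fin 2) (Fin 4) F)
    (hL : L.rank = 2) (H : Matrix (Fin 3) (Fin 4) F) (hH : H.rank = 3) :
    Submodule.span F (Set.range fun i : Fin 2 => L i)
        ≤ Submodule.span F (Set.range fun i : Fin 3 => H i) ↔
      ((L.submatrix id ![0, 1]).det * (H.submatrix id ![0, 2, 3]).det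
          - (L.submatrix id ![0, 2]).det * (H.submatrix id ![0, 1, 3]).det
          + (L.submatrix id ![0, 3]).det * (H.submatrix id ![0, 1, 2]).det = 0
        ∧ (L.submatrix id ![0, 1]).det * (H.submatrix id ![1, 2, 3]).det
          - (L.submatrix id ![1, 2]).det * (H.submatrix id ![0, 1, 3]).det
          + (L.submatrix id ![1, 3]).det * (H.submatrix id ![0, 1, 2]).det = 0
        ∧ (L.submatrix id ![0, 2]).det * (H.submatrix id ![1, 2, 3]).det
          - (L.submatrix id ![1, 2]).det * (H.submatrix id ![0, 2, 3]).det
          + (L.submatrix id ![2, 3]).det * (H.submatrix id ![0, 1, 2]).det = 0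
        ∧ (L.submatrix id ![0, 3]).det * (H.submatrix id ![1, 2, 3]).det
          - (L.submatrix id ![1, 3]).det * (H.submatrix id ![0, 2, 3]).det
          + (L.submatrix id ![2, 3]).det * (H.submatrix id ![0, 1, 3]).det = 0) := by
  have hLi : LinearIndependent F L.row :=
    L.linearIndependent_row_iff_rank_eq_card.2 (hL.trans (Fintype.card_fin 2).symm)
  have hHi : LinearIndependent F H.row :=
    H.linearIndependent_row_iff_rank_eq_card.2 (hH.trans (Fintype.card_fin 3).symm)
  refine (span_row_le_span_row_iff L hHi).trans ?_
  rw [Fin.forall_fin_two, ← hLi.smul_sub_smul_eq_zero_iff, row, ← plucker_expressions_eq_smul_sub_smul]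
  simp only [cons_eq_zero_iff, zero_empty, and_true]
end

section
/- Let A be an n×n matrix over a commutative ring and D the diagonal matrix with diagonal entries d₁,…,dₙ. Then det(D + A) = Σ_{S ⊆ {1,…,n}} (det A_{S,S}) · ∏_{i ∉ S} d_i, where det A_{∅,∅} = 1. -/
/-!
Expand `det (A + diagonal d)` multilinearly in the rows. The term taking the rows indexed by `s`
from `A` and the others from `diagonal d` is `∏ i ∈ sᶜ, d i` times the determinant of the matrix
with the rows of `A` on `s` and the rows of `1` off `s`, and that determinant is the principal
minor of `A` on `s`.
-/

open Finset Matrix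

theorem Matrix.det_diagonal_add_eq_sum_principal_minors {R ι : Type*} [CommRing R] [Fintype ι]
    [DecidableEq ι] (A : Matrix ι ι R) (d : ι → R) :
    (diagonal d + A).det =
      ∑ s : Finset ι, (A.submatrix (↑) (↑) : Matrix s s R).det * ∏ i ∈ sᶜ, d i := by
  rw [add_comm]
  change detRowAlternating (A.row + (diagonal d).row) = _
  rw [detRowAlternating.map_add_univ]
  refine sum_congr rfl fun s _ => ?_
  have hrows : s.piecewise A.row (diagonal d).row =
      sᶜ.piecewise (fun i => d i • s.piecewise A.row (1 : Matrix ι ι R).row i)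
        (s.piecewise A.row (1 : Matrix ι ι R).row) := by
    ext i j
    by_cases hi : i ∈ s <;> simp [Finset.piecewise, hi, Matrix.row, diagonal_apply, one_apply]
  rw [hrows, mul_comm, ← smul_eq_mul, ← det_piecewise_one_eq_submatrix_det A s]
  exact detRowAlternating.toMultilinearMap.map_piecewise_smul _ _ _

theorem Matrix.det_submatrix_coe_eq_det_submatrix_orderEmbOfFin {R α : Type*} [CommRing R]
    [LinearOrder α] (A : Matrix α α R) (s : Finset α) :
    (A.submatrix (↑) (↑) : Matrix s s R).det =
      (A.submatrix (s.orderEmbOfFin rfl) (s.orderEmbOfFin rfl)).det :=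
  (det_submatrix_equiv_self (s.orderIsoOfFin rfl).toEquiv (A.submatrix (↑) (↑))).symm

/-- Let `A` be an `n×n` matrix over a commutative ring and `D` the
diagonal matrix with diagonal entries `d₁,…,dₙ`.  Then
`det(D + A) = Σ_{S ⊆ {1,…,n}} (det A_{S,S}) · ∏_{i ∉ S} d_i`,
where the principal minor on the empty set is `1`. -/
theorem det_diagonal_add {R : Type*} [CommRing R] {n : ℕ}
    (A : Matrix (Fin n) (Fin n) R) (d : Fin n → R) :
    (Matrix.diagonal d + A).det =
      ∑ S ∈ Finset.univ.powerset,
        (A.submatrix (S.orderEmbOfFin rfl) (S.orderEmbOfFin rfl)).det * ∏ i ∈ Sᶜ, d i := by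
  rw [det_diagonal_add_eq_sum_principal_minors, powerset_univ]
  simp only [det_submatrix_coe_eq_det_submatrix_orderEmbOfFin]
end

section
/- Let F be a field, V an invertible 4×4 matrix over F, and X a symmetric 4×4 matrix over F. Let P be the first row of V, L the 2×4 matrix formed by the first two rows of V, and H the 3×4 matrix formed by the first three rows of V. Write det(V⁻¹ · diag(ε³,ε²,ε,1) · (V⁻¹)ᵀ + tX) = Σ_{k=0}^{4} c_k(ε) t^k in F[ε][t], and set D(ε) = Δ(c₀(ε), c₁(ε), c₂(ε), c₃(ε), c₄(ε)) ∈ F[ε]. Then the coefficients of ε⁰, ε¹, …, ε⁷ in D(ε) are all zero, and the coefficient of ε⁸ in D(ε) equals (det V)⁻¹² · (P X Pᵀ)² · det(L X Lᵀ)² · det(H X Hᵀ)². -/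
open Polynomial Matrix

/-- The discriminant of the quartic `c₄t⁴ + c₃t³ + c₂t² + c₁t + c₀`. -/
def quarticDisc {R : Type*} [CommRing R] (c0 c1 c2 c3 c4 : R) : R :=
  256*c0^3*c4^3 - 192*c0^2*c1*c3*c4^2 - 128*c0^2*c2^2*c4^2 + 144*c0^2*c2*c3^2*c4
    - 27*c0^2*c3^4 + 144*c0*c1^2*c2*c4^2 - 6*c0*c1^2*c3^2*c4 - 80*c0*c1*c2^2*c3*c4
    + 18*c0*c1*c2*c3^3 + 16*c0*c2^4*c4 - 4*c0*c2^3*c3^2 - 27*c1^4*c4^2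
    + 18*c1^3*c2*c3*c4 - 4*c1^3*c3^3 - 4*c1^2*c2^3*c4 + c1^2*c2^2*c3^2

/-!
Write `B = V X Vᵀ`. Conjugating by `V` turns the pencil into
`V⁻¹ (diag(ε³, ε², ε, 1) + t B) V⁻ᵀ`, so `c_k = det(V)⁻² e_k`, where `e_k` is the sum over the
`k`-subsets `S` of the principal minors `det B_S`, each weighted by `ε` to the power of the weight
of the complement of `S` (weights `3, 2, 1, 0`). Hence `e₀ = ε⁶`, `ε³ ∣ e₁`, `ε ∣ e₂`, and the
constant terms of `e₁ / ε³`, `e₂ / ε`, `e₃` are the leading principal minors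
`B₀₀ = P X Pᵀ`, `det B_{01} = det(L X Lᵀ)`, `det B_{012} = det(H X Hᵀ)`.
With these orders every monomial of `Δ` has `ε`-order at least `8`, and only `c₁² c₂² c₃²` has order
exactly `8`; the factor `det(V)⁻¹²` comes from `Δ` being homogeneous of degree `6`.
-/

section

variable {R : Type*} [CommRing R]

theorem quarticDisc_mul (a c0 c1 c2 c3 c4 : R) :
    quarticDisc (a * c0) (a * c1) (a * c2) (a * c3) (a * c4)
      = a ^ 6 * quarticDisc c0 c1 c2 c3 c4 := by
  unfold quarticDisc; ring

theorem exists_quarticDisc_weighted (x g1 g2 e3 e4 : R) :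
    ∃ r, quarticDisc (x ^ 6) (x ^ 3 * g1) (x * g2) e3 e4
      = x ^ 8 * ((g1 * g2 * e3) ^ 2 + x * r) :=
  ⟨256*x^9*e4^3 - 192*x^6*g1*e3*e4^2 - 128*x^5*g2^2*e4^2 + 144*x^4*g2*e3^2*e4
      - 27*x^3*e3^4 + 144*x^4*g1^2*g2*e4^2 - 6*x^3*g1^2*e3^2*e4 - 80*x^2*g1*g2^2*e3*e4
      + 18*x*g1*g2*e3^3 + 16*x*g2^4*e4 - 4*g2^3*e3^2 - 27*x^3*g1^4*e4^2
      + 18*x*g1^3*g2*e3*e4 - 4*g1^3*e3^3 - 4*g1^2*g2^3*e4,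
    by unfold quarticDisc; ring⟩

theorem coeff_quarticDisc_of_weighted (a : R) (g1 g2 e3 e4 : R[X]) (p : R[X][X])
    (hp : p = C (C a) * (C (X ^ 6) + C (X ^ 3 * g1) * X + C (X * g2) * X ^ 2 + C e3 * X ^ 3
      + C e4 * X ^ 4)) :
    let D := quarticDisc (p.coeff 0) (p.coeff 1) (p.coeff 2) (p.coeff 3) (p.coeff 4)
    (∀ k < 8, D.coeff k = 0) ∧ D.coeff 8 = a ^ 6 * (g1.eval 0 * g2.eval 0 * e3.eval 0) ^ 2 := by
  obtain ⟨r, hr⟩ := exists_quarticDisc_weighted X g1 g2 e3 e4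
  intro D
  have hD : D = C (a ^ 6) * (X ^ 8 * ((g1 * g2 * e3) ^ 2 + X * r)) := by
    have hp' : p = C (C a * X ^ 6) + C (C a * (X ^ 3 * g1)) * X + C (C a * (X * g2)) * X ^ 2
        + C (C a * e3) * X ^ 3 + C (C a * e4) * X ^ 4 := by
      simp only [hp, map_mul]; ring
    simp only [D, hp', coeff_add, coeff_C_mul_X_pow, coeff_C_mul_X, coeff_C]
    norm_num
    rw [quarticDisc_mul, hr]
  refine ⟨fun k hk => ?_, ?_⟩
  · rw [hD, coeff_C_mul, coeff_X_pow_mul', if_neg (by omega), mul_zero]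
  · rw [hD, coeff_C_mul, coeff_X_pow_mul', if_pos le_rfl, Nat.sub_self,
      coeff_zero_eq_eval_zero]
    simp

theorem Matrix.det_fin_four (M : Matrix (Fin 4) (Fin 4) R) :
    M.det =
      M 0 0 * (M 1 1 * (M 2 2 * M 3 3 - M 2 3 * M 3 2)
             - M 1 2 * (M 2 1 * M 3 3 - M 2 3 * M 3 1)
             + M 1 3 * (M 2 1 * M 3 2 - M 2 2 * M 3 1))
    - M 0 1 * (M 1 0 * (M 2 2 * M 3 3 - M 2 3 * M 3 2)
             - M 1 2 * (M 2 0 * M 3 3 - M 2 3 * M 3 0)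
             + M 1 3 * (M 2 0 * M 3 2 - M 2 2 * M 3 0))
    + M 0 2 * (M 1 0 * (M 2 1 * M 3 3 - M 2 3 * M 3 1)
             - M 1 1 * (M 2 0 * M 3 3 - M 2 3 * M 3 0)
             + M 1 3 * (M 2 0 * M 3 1 - M 2 1 * M 3 0))
    - M 0 3 * (M 1 0 * (M 2 1 * M 3 2 - M 2 2 * M 3 1)
             - M 1 1 * (M 2 0 * M 3 2 - M 2 2 * M 3 0)
             + M 1 2 * (M 2 0 * M 3 1 - M 2 1 * M 3 0)) := by
  rw [det_succ_row_zero, Fin.sum_univ_four]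
  simp only [det_fin_three, submatrix_apply, Fin.succAbove, Fin.succAbove_zero, Fin.castSucc_zero,
    Fin.castSucc_one, Fin.reduceCastSucc, Fin.succ_zero_eq_one, Fin.succ_one_eq_two,
    Fin.reduceSucc, Fin.isValue, Fin.coe_ofNat_eq_mod, Nat.reduceAdd, Nat.zero_mod,
    Nat.one_mod, Nat.mod_succ, zero_lt_one, lt_self_iff_false, Fin.lt_one_iff, Fin.reduceLT,
    Fin.reduceEq, ↓reduceIte, pow_zero, pow_one, one_mul, neg_mul]
  ring

theorem det_diagonal_pow_add_X_smul (x : R) (B : Matrix (Fin 4) (Fin 4) R) :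
    ((diagonal ![x ^ 3, x ^ 2, x, 1]).map C + (X : R[X]) • B.map C).det =
      C (x ^ 6)
      + C (x ^ 3 * (B 0 0 + x * B 1 1 + x ^ 2 * B 2 2 + x ^ 3 * B 3 3)) * X
      + C (x * ((B.submatrix ![0, 1] ![0, 1]).det + x * (B.submatrix ![0, 2] ![0, 2]).det
          + x ^ 2 * ((B.submatrix ![0, 3] ![0, 3]).det + (B.submatrix ![1, 2] ![1, 2]).det)
          + x ^ 3 * (B.submatrix ![1, 3] ![1, 3]).det
          + x ^ 4 * (B.submatrix ![2, 3] ![2, 3]).det)) * X ^ 2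
      + C ((B.submatrix ![0, 1, 2] ![0, 1, 2]).det + x * (B.submatrix ![0, 1, 3] ![0, 1, 3]).det
          + x ^ 2 * (B.submatrix ![0, 2, 3] ![0, 2, 3]).det
          + x ^ 3 * (B.submatrix ![1, 2, 3] ![1, 2, 3]).det) * X ^ 3
      + C B.det * X ^ 4 := by
  simp only [det_fin_four, det_fin_three, det_fin_two, submatrix_apply, Matrix.add_apply,
    Matrix.smul_apply, map_apply, diagonal_apply, smul_eq_mul]
  simp only [cons_val_zero, cons_val_one, cons_val, cons_val_fin_one, ↓reduceIte, Fin.reduceEq,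
    map_pow, map_mul, map_add, map_sub, map_one, map_zero, X_mul_C, zero_add]
  ring

theorem Matrix.det_map_ringHom {S : Type*} [CommRing S] {n : Type*} [Fintype n] [DecidableEq n]
    (f : R →+* S) (M : Matrix n n R) : (M.map f).det = f M.det :=
  (f.map_det M).symm

theorem Matrix.submatrix_mul_mul_transpose {l m n : Type*} [Fintype n] (V : Matrix m n R)
    (A : Matrix n n R) (f : l → m) :
    (V * A * Vᵀ).submatrix f f = V.submatrix f id * A * (V.submatrix f id)ᵀ := by
  rw [submatrix_mul _ _ _ id _ Function.bijective_id,
    submatrix_mul _ _ _ id _ Function.bijective_id]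
  rfl

theorem Matrix.mul_add_smul_mul_transpose_of_mul_eq_one {n : Type*} [Fintype n] [DecidableEq n]
    {W V : Matrix n n R} (hWV : W * V = 1) (D A : Matrix n n R) (t : R) :
    W * (D + t • (V * A * Vᵀ)) * Wᵀ = W * D * Wᵀ + t • A := by
  have hVW : Vᵀ * Wᵀ = 1 := by rw [← transpose_mul, hWV, transpose_one]
  calc W * (D + t • (V * A * Vᵀ)) * Wᵀ = W * D * Wᵀ + t • (W * V * A * (Vᵀ * Wᵀ)) := by
        simp only [Matrix.mul_add, Matrix.add_mul, Matrix.mul_smul, Matrix.smul_mul,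
          Matrix.mul_assoc]
    _ = W * D * Wᵀ + t • A := by rw [hWV, hVW, Matrix.one_mul, Matrix.mul_one]

end

theorem det_inv_conj_add_X_smul {F : Type*} [Field F] {n : Type*} [Fintype n] [DecidableEq n]
    (V A : Matrix n n F) (hV : IsUnit V.det) (Λ : Matrix n n F[X]) :
    ((V⁻¹.map C * Λ * V⁻¹ᵀ.map C).map C + (X : F[X][X]) • A.map (fun a => C (C a))).det
      = C (C (V.det⁻¹ ^ 2)) * (Λ.map C + (X : F[X][X]) • ((V * A * Vᵀ).map C).map C).det := by
  let φ : F →+* F[X][X] := C.comp C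
  let W := φ.mapMatrix V⁻¹
  have hWV : W * φ.mapMatrix V = 1 := by rw [← map_mul, nonsing_inv_mul V hV, map_one]
  have hB : ((V * A * Vᵀ).map C).map C = φ.mapMatrix V * φ.mapMatrix A * (φ.mapMatrix V)ᵀ := by
    change φ.mapMatrix (V * A * Vᵀ) = _
    simp [transpose_map]
  have hconj : (V⁻¹.map C * Λ * V⁻¹ᵀ.map C).map C + (X : F[X][X]) • A.map (fun a => C (C a))
      = W * (Λ.map C + (X : F[X][X]) • ((V * A * Vᵀ).map C).map C) * Wᵀ := by
    rw [hB, mul_add_smul_mul_transpose_of_mul_eq_one hWV]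
    simp only [W, transpose_map, Matrix.map_mul, Matrix.map_map, RingHom.mapMatrix_apply]
    rfl
  rw [hconj, det_mul, det_mul, det_transpose, ← RingHom.map_det, det_nonsing_inv,
    Ring.inverse_eq_inv]
  simp only [φ, RingHom.comp_apply, map_pow]
  ring

theorem hurwitz_leading_form_general {F : Type*} [Field F]
    (V : Matrix (Fin 4) (Fin 4) F) (hV : IsUnit V.det)
    (A : Matrix (Fin 4) (Fin 4) F) :
    let P : Fin 4 → F := V 0
    let L : Matrix (Fin 2) (Fin 4) F := V.submatrix ![0, 1] id
    let H : Matrix (Fin 3) (Fin 4) F := V.submatrix ![0, 1, 2] id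
    let U : Matrix (Fin 4) (Fin 4) (Polynomial F) :=
      (V⁻¹).map Polynomial.C
        * Matrix.diagonal ![Polynomial.X ^ 3, Polynomial.X ^ 2, Polynomial.X, 1]
        * ((V⁻¹)ᵀ).map Polynomial.C
    let M : Matrix (Fin 4) (Fin 4) (Polynomial (Polynomial F)) :=
      U.map Polynomial.C
        + (Polynomial.X : Polynomial (Polynomial F)) •
            A.map (fun a => Polynomial.C (Polynomial.C a))
    let c : ℕ → Polynomial F := fun k => M.det.coeff k
    let D : Polynomial F := quarticDisc (c 0) (c 1) (c 2) (c 3) (c 4)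
    (∀ k < 8, D.coeff k = 0)
    ∧ D.coeff 8 =
        (V.det)⁻¹ ^ 12 * (P ⬝ᵥ A.mulVec P) ^ 2
          * ((L * A * Lᵀ).det) ^ 2 * ((H * A * Hᵀ).det) ^ 2 := by
  intro P L H U M c D
  have hMdet : M.det = _ := det_inv_conj_add_X_smul V A hV (diagonal ![X ^ 3, X ^ 2, X, 1])
  rw [det_diagonal_pow_add_X_smul] at hMdet
  obtain ⟨hlow, hlead⟩ := coeff_quarticDisc_of_weighted _ _ _ _ _ _ hMdet
  refine ⟨hlow, hlead.trans ?_⟩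
  simp only [submatrix_map, det_map_ringHom, map_apply, eval_add, eval_mul, eval_C, eval_X,
    eval_pow, ne_eq, OfNat.ofNat_ne_zero, not_false_eq_true, zero_pow, zero_mul, add_zero]
  rw [mul_mul_apply, transpose_transpose, submatrix_mul_mul_transpose,
    submatrix_mul_mul_transpose]
  ring

/-- Let `F` be a field, `V` an invertible 4×4 matrix over `F`, and
`X` a symmetric 4×4 matrix over `F`.  Let `P`, `L`, `H` be the first row, the
first two rows, and the first three rows of `V`.  Writing
`det(V⁻¹·diag(ε³,ε²,ε,1)·(V⁻¹)ᵀ + tX) = Σ c_k(ε) tᵏ` in `F[ε][t]` and setting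
`D(ε) = Δ(c₀,…,c₄) ∈ F[ε]`, the coefficients of `ε⁰,…,ε⁷` in `D(ε)` all vanish,
and the coefficient of `ε⁸` equals
`(det V)⁻¹² · (P X Pᵀ)² · det(L X Lᵀ)² · det(H X Hᵀ)²`. -/
theorem hurwitz_leading_form {F : Type*} [Field F]
    (V : Matrix (Fin 4) (Fin 4) F) (hV : IsUnit V.det)
    (A : Matrix (Fin 4) (Fin 4) F) (hA : A.IsSymm) :
    let P : Fin 4 → F := V 0
    let L : Matrix (Fin 2) (Fin 4) F := V.submatrix ![0, 1] id
    let H : Matrix (Fin 3) (Fin 4) F := V.submatrix ![0, 1, 2] id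
    let U : Matrix (Fin 4) (Fin 4) (Polynomial F) :=
      (V⁻¹).map Polynomial.C
        * Matrix.diagonal ![Polynomial.X ^ 3, Polynomial.X ^ 2, Polynomial.X, 1]
        * ((V⁻¹)ᵀ).map Polynomial.C
    let M : Matrix (Fin 4) (Fin 4) (Polynomial (Polynomial F)) :=
      U.map Polynomial.C
        + (Polynomial.X : Polynomial (Polynomial F)) •
            A.map (fun a => Polynomial.C (Polynomial.C a))
    let c : ℕ → Polynomial F := fun k => M.det.coeff k
    let D : Polynomial F := quarticDisc (c 0) (c 1) (c 2) (c 3) (c 4)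
    (∀ k < 8, D.coeff k = 0)
    ∧ D.coeff 8 =
        (V.det)⁻¹ ^ 12 * (P ⬝ᵥ A.mulVec P) ^ 2
          * ((L * A * Lᵀ).det) ^ 2 * ((H * A * Hᵀ).det) ^ 2 :=
  hurwitz_leading_form_general V hV A
end

section
/- For every symmetric 4×4 matrix X over a commutative ring, det X_{{1,2},{1,3}} · det X_{{1,2,3},{1,3,4}} − det X_{{1,3},{1,3}} · det X_{{1,2,3},{1,2,4}} + det X_{{1,3},{1,4}} · det X_{{1,2,3},{1,2,3}} = 0. -/
open Matrix

/-- For every symmetric 4×4 matrix `X` over a commutative ring,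
`det X_{{1,2},{1,3}} · det X_{{1,2,3},{1,3,4}} − det X_{{1,3},{1,3}} · det X_{{1,2,3},{1,2,4}}
 + det X_{{1,3},{1,4}} · det X_{{1,2,3},{1,2,3}} = 0`. -/
theorem degree_011_relation {R : Type*} [CommRing R]
    (X : Matrix (Fin 4) (Fin 4) R) (hX : X.IsSymm) :
    (X.submatrix ![0, 1] ![0, 2]).det * (X.submatrix ![0, 1, 2] ![0, 2, 3]).det
      - (X.submatrix ![0, 2] ![0, 2]).det * (X.submatrix ![0, 1, 2] ![0, 1, 3]).det
      + (X.submatrix ![0, 2] ![0, 3]).det * (X.submatrix ![0, 1, 2] ![0, 1, 2]).det = 0 := by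
  have h : ∀ i j, X j i = X i j := fun i j => hX.apply i j
  simp only [Matrix.det_fin_two, Matrix.det_fin_three, Matrix.submatrix_apply,
    Matrix.cons_val_zero, Matrix.cons_val_one, Matrix.head_cons, Matrix.cons_val_two,
    Matrix.tail_cons, Matrix.cons_val_three, Matrix.head_fin_const]
  rw [h 0 1, h 0 2, h 1 2]
  ring
end

section
/- For every symmetric 4×4 matrix X over a commutative ring, det X_{{1,2},{2,4}} · det X_{{2,4},{3,4}} − det X_{{1,3},{2,4}} · det X_{{2,4},{2,4}} + det X_{{1,4},{2,4}} · det X_{{2,3},{2,4}} = 0. -/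
/-!
With `Y = ∧₂X`, the relation only involves the `2 × 2` minors of the `4 × 2` matrix formed by the
columns `2, 4` of `X`, once the symmetry of `X` is used to transpose the minor on rows `{2, 4}` and
columns `{3, 4}`. It is then the Plücker relation among the maximal minors of a `4 × 2` matrix.
-/

namespace Matrix

variable {R : Type*} [CommRing R]

theorem plucker_relation_det_fin_two {m : Type*} (Z : Matrix m (Fin 2) R) (a b c d : m) :
    (Z.submatrix ![a, b] id).det * (Z.submatrix ![c, d] id).det
      - (Z.submatrix ![a, c] id).det * (Z.submatrix ![b, d] id).det
      + (Z.submatrix ![a, d] id).det * (Z.submatrix ![b, c] id).det = 0 := by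
  simp only [det_fin_two, submatrix_apply, id, Matrix.cons_val_zero, Matrix.cons_val_one]
  ring

theorem IsSymm.det_submatrix_comm {n k : Type*} [Fintype k] [DecidableEq k]
    {X : Matrix n n R} (hX : X.IsSymm) (r c : k → n) :
    (X.submatrix r c).det = (X.submatrix c r).det := by
  rw [← det_transpose, transpose_submatrix, hX.eq]

end Matrix

open Matrix

/-- For every symmetric 4×4 matrix `X` over a commutative ring,
`det X_{{1,2},{2,4}} · det X_{{2,4},{3,4}} − det X_{{1,3},{2,4}} · det X_{{2,4},{2,4}}
 + det X_{{1,4},{2,4}} · det X_{{2,3},{2,4}} = 0`. -/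
theorem degree_020_relation {R : Type*} [CommRing R]
    (X : Matrix (Fin 4) (Fin 4) R) (hX : X.IsSymm) :
    (X.submatrix ![0, 1] ![1, 3]).det * (X.submatrix ![1, 3] ![2, 3]).det
      - (X.submatrix ![0, 2] ![1, 3]).det * (X.submatrix ![1, 3] ![1, 3]).det
      + (X.submatrix ![0, 3] ![1, 3]).det * (X.submatrix ![1, 2] ![1, 3]).det = 0 := by
  rw [hX.det_submatrix_comm ![1, 3] ![2, 3]]
  exact plucker_relation_det_fin_two (X.submatrix id ![1, 3]) 0 1 2 3
end

section
/- Let K be an algebraically closed field of characteristic different from 2, and let X = (x_{ij}) be a symmetric 4×4 matrix over K. Then all principal 2×2 minors of X vanish, i.e. x_{ii}x_{jj} = x_{ij}² for all 1 ≤ i < j ≤ 4, if and only if there exist a vector v = (v₁,v₂,v₃,v₄) ∈ K⁴ and signs s₂₃, s₂₄, s₃₄ ∈ {1,−1} such that x_{ii} = v_i² for all i, x_{1j} = v₁v_j for j = 2,3,4, and x_{ij} = s_{ij} v_i v_j for (i,j) ∈ {(2,3),(2,4),(3,4)}. In other words, the variety of symmetric 4×4 matrices whose principal 2×2 minors all vanish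 is the union of the eight scaled Veronese varieties obtained by Hadamard-scaling the rank-one symmetric matrices vᵀv by the eight sign matrices U_{ijk}. -/
/-!
Take `v₁ = √x₁₁` and `v_j = x₁ⱼ / v₁`; the minors through the first index give `v_j² = x_jj`
(and if `x₁₁ = 0` the first row vanishes, so any square roots do). Every other minor then reads
`x_ij² = (v_i v_j)²`, which in a field means `x_ij = ± v_i v_j`.
-/

theorem sq_mul_sq_eq_sq_iff {R : Type*} [CommRing R] [NoZeroDivisors R] {a b c : R} :
    a ^ 2 * b ^ 2 = c ^ 2 ↔ ∃ s : R, (s = 1 ∨ s = -1) ∧ c = s * (a * b) := by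
  rw [← mul_pow, eq_comm, sq_eq_sq_iff_eq_or_eq_neg]
  constructor
  · rintro (h | h)
    · exact ⟨1, .inl rfl, by rw [h, one_mul]⟩
    · exact ⟨-1, .inr rfl, by rw [h, neg_one_mul]⟩
  · rintro ⟨s, rfl | rfl, rfl⟩
    · exact .inl (one_mul _)
    · exact .inr (neg_one_mul _)

theorem exists_diag_eq_sq_row_eq_mul {K ι : Type*} [Field K] [IsAlgClosed K]
    (X : Matrix ι ι K) (i₀ : ι) (h : ∀ j, j ≠ i₀ → X i₀ i₀ * X j j = X i₀ j ^ 2) :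
    ∃ v : ι → K, (∀ i, X i i = v i ^ 2) ∧ ∀ j, X i₀ j = v i₀ * v j := by
  choose r hr using fun i => IsAlgClosed.exists_pow_nat_eq (X i i) two_pos
  by_cases h₀ : X i₀ i₀ = 0
  · refine ⟨r, fun i => (hr i).symm, fun j => ?_⟩
    have hr₀ : r i₀ = 0 := pow_eq_zero_iff two_ne_zero |>.1 (hr i₀ ▸ h₀)
    rcases eq_or_ne j i₀ with rfl | hj
    · rw [h₀, hr₀, zero_mul]
    · rw [hr₀, zero_mul, ← pow_eq_zero_iff two_ne_zero, ← h j hj, h₀, zero_mul]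
  · have hr₀ : r i₀ ≠ 0 := by rintro hr₀; exact h₀ (by rw [← hr, hr₀, zero_pow two_ne_zero])
    have hv₀ : X i₀ i₀ / r i₀ = r i₀ := by rw [← hr]; field_simp
    refine ⟨fun j => X i₀ j / r i₀, fun i => ?_, fun j => ?_⟩ <;> beta_reduce
    · rcases eq_or_ne i i₀ with rfl | hi
      · rw [hv₀, hr]
      · rw [div_pow, ← h i hi, ← hr i₀, mul_div_cancel_left₀ _ (pow_ne_zero 2 hr₀)]
    · rw [hv₀, mul_div_cancel₀ _ hr₀]

theorem principal_two_minors_vanish_iff_general {K : Type*} [Field K] [IsAlgClosed K]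
    (X : Matrix (Fin 4) (Fin 4) K) :
    (∀ i j : Fin 4, i < j → X i i * X j j = X i j ^ 2) ↔
      ∃ (v : Fin 4 → K) (s23 s24 s34 : K),
        (s23 = 1 ∨ s23 = -1) ∧ (s24 = 1 ∨ s24 = -1) ∧ (s34 = 1 ∨ s34 = -1) ∧
        (∀ i : Fin 4, X i i = v i ^ 2) ∧
        X 0 1 = v 0 * v 1 ∧ X 0 2 = v 0 * v 2 ∧ X 0 3 = v 0 * v 3 ∧
        X 1 2 = s23 * (v 1 * v 2) ∧ X 1 3 = s24 * (v 1 * v 3) ∧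
        X 2 3 = s34 * (v 2 * v 3) := by
  constructor
  · intro h
    obtain ⟨v, hd, hrow⟩ := exists_diag_eq_sq_row_eq_mul X 0 fun j hj =>
      h 0 j (Fin.pos_iff_ne_zero.2 hj)
    have sign (i j : Fin 4) (hij : i < j) :
        ∃ s : K, (s = 1 ∨ s = -1) ∧ X i j = s * (v i * v j) :=
      sq_mul_sq_eq_sq_iff.1 (by rw [← hd, ← hd]; exact h i j hij)
    obtain ⟨s23, hs23, h12⟩ := sign 1 2 (by decide)
    obtain ⟨s24, hs24, h13⟩ := sign 1 3 (by decide)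
    obtain ⟨s34, hs34, h23⟩ := sign 2 3 (by decide)
    exact ⟨v, s23, s24, s34, hs23, hs24, hs34, hd, hrow 1, hrow 2, hrow 3, h12, h13, h23⟩
  · rintro ⟨v, s23, s24, s34, hs23, hs24, hs34, hd, h01, h02, h03, h12, h13, h23⟩ i j hij
    rw [hd, hd, sq_mul_sq_eq_sq_iff]
    fin_cases i <;> fin_cases j
    all_goals first
      | exact absurd hij (by decide)
      | exact ⟨1, .inl rfl, by rwa [one_mul]⟩
      | exact ⟨_, hs23, h12⟩
      | exact ⟨_, hs24, h13⟩
      | exact ⟨_, hs34, h23⟩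

/-- Let `K` be an algebraically closed field of characteristic
different from 2 and `X` a symmetric 4×4 matrix over `K`.  All principal 2×2
minors of `X` vanish (`x_{ii}x_{jj} = x_{ij}²` for `i < j`) if and only if there
are `v ∈ K⁴` and signs `s₂₃, s₄₂, s₃₄ ∈ {1,−1}` with `x_{ii} = v_i²`,
`x_{1j} = v₁v_j` for `j = 2,3,4`, and `x_{ij} = s_{ij}v_iv_j` for
`(i,j) ∈ {(2,3),(2,4),(3,4)}`. -/
theorem principal_two_minors_vanish_iff {K : Type*} [Field K] [IsAlgClosed K]
    (hchar : ringChar K ≠ 2) (X : Matrix (Fin 4) (Fin 4) K) (hX : X.IsSymm) :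
    (∀ i j : Fin 4, i < j → X i i * X j j = X i j ^ 2) ↔
      ∃ (v : Fin 4 → K) (s23 s24 s34 : K),
        (s23 = 1 ∨ s23 = -1) ∧ (s24 = 1 ∨ s24 = -1) ∧ (s34 = 1 ∨ s34 = -1) ∧
        (∀ i : Fin 4, X i i = v i ^ 2) ∧
        X 0 1 = v 0 * v 1 ∧ X 0 2 = v 0 * v 2 ∧ X 0 3 = v 0 * v 3 ∧
        X 1 2 = s23 * (v 1 * v 2) ∧ X 1 3 = s24 * (v 1 * v 3) ∧
        X 2 3 = s34 * (v 2 * v 3) :=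
  principal_two_minors_vanish_iff_general X
end

section
/- Let R be a commutative ring and x₁₂, x₁₃, x₁₄, x₂₃, x₂₄, x₃₄ ∈ R. Let X be the symmetric 4×4 matrix with off-diagonal entries x_{ij} and diagonal entries x₁₂x₁₃x₁₄, x₁₂x₂₃x₂₄, x₁₃x₂₃x₃₄, x₁₄x₂₄x₃₄ (in positions (1,1), (2,2), (3,3), (4,4) respectively). Set a = x₁₂x₃₄, b = x₁₃x₂₄, c = x₁₄x₂₃ and E = abc − a − b − c + 2 (so that E = det [[a,1,1],[1,b,1],[1,1,c]]). Then det X_{{1,2,3},{1,2,3}} = x₁₂x₁₃x₂₃·E, det X_{{1,2,4},{1,2,4}} = x₁₂x₁₄x₂₄·E, det X_{{1,3,4},{1,3,4}} = x₁₃x₁₄x₃₄·E, and det X_{{2,3,4},{2,3,4}} = x₂₃x₂₄x₃₄·E. In particular, if E = 0 then all four principal 3×3 minors of X vanish. -/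
open Matrix

/-- Let `R` be a commutative ring and
`x₁₂, x₁₃, x₁₄, x₂₃, x₂₄, x₃₄ ∈ R`.  For the symmetric 4×4 matrix `X` with
these off-diagonal entries and diagonal entries `x₁₂x₁₃x₁₄, x₁₂x₂₃x₂₄,
x₁₃x₂₃x₃₄, x₁₄x₂₄x₃₄`, setting `a = x₁₂x₃₄`, `b = x₁₃x₂₄`, `c = x₁₄x₂₃` and
`E = abc − a − b − c + 2`, the four principal 3×3 minors of `X` are
`x₁₂x₁₃x₂₃·E`, `x₁₂x₁₄x₂₄·E`, `x₁₃x₁₄x₃₄·E`, `x₂₃x₂₄x₃₄·E`.  In particular if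
`E = 0` then all four principal 3×3 minors vanish. -/
theorem parametric_four_planes {R : Type*} [CommRing R]
    (x12 x13 x14 x23 x24 x34 : R) :
    let X : Matrix (Fin 4) (Fin 4) R :=
      Matrix.of ![![x12 * x13 * x14, x12, x13, x14],
                  ![x12, x12 * x23 * x24, x23, x24],
                  ![x13, x23, x13 * x23 * x34, x34],
                  ![x14, x24, x34, x14 * x24 * x34]]
    let a : R := x12 * x34
    let b : R := x13 * x24
    let c : R := x14 * x23
    let E : R := a * b * c - a - b - c + 2
    ((X.submatrix ![0, 1, 2] ![0, 1, 2]).det = x12 * x13 * x23 * E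
      ∧ (X.submatrix ![0, 1, 3] ![0, 1, 3]).det = x12 * x14 * x24 * E
      ∧ (X.submatrix ![0, 2, 3] ![0, 2, 3]).det = x13 * x14 * x34 * E
      ∧ (X.submatrix ![1, 2, 3] ![1, 2, 3]).det = x23 * x24 * x34 * E)
    ∧ (E = 0 →
        (X.submatrix ![0, 1, 2] ![0, 1, 2]).det = 0
          ∧ (X.submatrix ![0, 1, 3] ![0, 1, 3]).det = 0
          ∧ (X.submatrix ![0, 2, 3] ![0, 2, 3]).det = 0
          ∧ (X.submatrix ![1, 2, 3] ![1, 2, 3]).det = 0) := by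
  intro X a b c E
  have h1 : (X.submatrix ![0, 1, 2] ![0, 1, 2]).det = x12 * x13 * x23 * E := by
    simp [X, a, b, c, E, Matrix.det_fin_three, Matrix.submatrix, Matrix.of_apply]; ring
  have h2 : (X.submatrix ![0, 1, 3] ![0, 1, 3]).det = x12 * x14 * x24 * E := by
    simp [X, a, b, c, E, Matrix.det_fin_three, Matrix.submatrix, Matrix.of_apply]; ring
  have h3 : (X.submatrix ![0, 2, 3] ![0, 2, 3]).det = x13 * x14 * x34 * E := by
    simp [X, a, b, c, E, Matrix.det_fin_three, Matrix.submatrix, Matrix.of_apply]; ring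
  have h4 : (X.submatrix ![1, 2, 3] ![1, 2, 3]).det = x23 * x24 * x34 * E := by
    simp [X, a, b, c, E, Matrix.det_fin_three, Matrix.submatrix, Matrix.of_apply]; ring
  refine ⟨⟨h1, h2, h3, h4⟩, fun hE => ?_⟩
  exact ⟨by rw [h1, hE, mul_zero], by rw [h2, hE, mul_zero], by rw [h3, hE, mul_zero], by rw [h4, hE, mul_zero]⟩
end

section
/- For every triple of signs (s₂₃, s₂₄, s₃₄) ∈ {1,−1}³ with (s₂₃, s₂₄, s₃₄) ≠ (1,1,1), there exists a vector v = (v₁,v₂,v₃,v₄) ∈ ℝ⁴ such that the symmetric 4×4 matrix M with entries M_{ii} = v_i², M_{1j} = M_{j1} = v₁v_j for j = 2,3,4, and M_{ij} = M_{ji} = s_{ij} v_i v_j for (i,j) ∈ {(2,3),(2,4),(3,4)} has rank at least 3. -/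
/-!
Take `v = (1, 1, 1, 1)`. For `{i, j} ⊆ {2, 3, 4}`, the principal 3×3 minor of `M` on the indices
`{1, i, j}` is `det !![1, 1, 1; 1, 1, s; 1, s, 1] = -(s - 1)²` with `s = s_{ij}`, so any sign
`s_{ij} ≠ 1` produces a nonzero 3×3 minor.
-/

open Matrix

theorem Matrix.card_le_rank_of_det_submatrix_ne_zero {m n k R : Type*} [Fintype n] [Fintype k]
    [DecidableEq k] [CommRing R] [IsDomain R] (A : Matrix m n R) (r : k → m) (c : k → n)
    (h : (A.submatrix r c).det ≠ 0) : Fintype.card k ≤ A.rank :=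
  (rank_of_det_ne_zero h).symm.le.trans (rank_submatrix_le A r c)

theorem det_ones_except_pair {R : Type*} [CommRing R] (s : R) :
    !![1, 1, 1; 1, 1, s; 1, s, 1].det = -(s - 1) ^ 2 := by
  simp only [det_fin_three, of_apply, cons_val', cons_val_zero, cons_val_fin_one, cons_val_one,
    cons_val, mul_one, one_mul, sub_sub_cancel_left]
  ring

theorem scaled_veronese_high_rank_general (s23 s24 s34 : ℝ)
    (hne : ¬(s23 = 1 ∧ s24 = 1 ∧ s34 = 1)) :
    ∃ v : Fin 4 → ℝ,
      3 ≤ (Matrix.of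
        ![![v 0 ^ 2, v 0 * v 1, v 0 * v 2, v 0 * v 3],
          ![v 0 * v 1, v 1 ^ 2, s23 * (v 1 * v 2), s24 * (v 1 * v 3)],
          ![v 0 * v 2, s23 * (v 1 * v 2), v 2 ^ 2, s34 * (v 2 * v 3)],
          ![v 0 * v 3, s24 * (v 1 * v 3), s34 * (v 2 * v 3), v 3 ^ 2]]).rank := by
  refine ⟨1, ?_⟩
  have minor_ne_zero {s : ℝ} (hs : s ≠ 1) : !![1, 1, 1; 1, 1, s; 1, s, 1].det ≠ 0 := by
    rw [det_ones_except_pair]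
    exact neg_ne_zero.2 (pow_ne_zero 2 (sub_ne_zero.2 hs))
  rcases not_and_or.1 hne with h23 | h
  · refine card_le_rank_of_det_submatrix_ne_zero _ ![0, 1, 2] ![0, 1, 2] ?_
    convert minor_ne_zero h23 using 2
    ext i j; fin_cases i <;> fin_cases j <;> simp
  rcases not_and_or.1 h with h24 | h34
  · refine card_le_rank_of_det_submatrix_ne_zero _ ![0, 1, 3] ![0, 1, 3] ?_
    convert minor_ne_zero h24 using 2
    ext i j; fin_cases i <;> fin_cases j <;> simp
  · refine card_le_rank_of_det_submatrix_ne_zero _ ![0, 2, 3] ![0, 2, 3] ?_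
    convert minor_ne_zero h34 using 2
    ext i j; fin_cases i <;> fin_cases j <;> simp

/-- For every triple of signs `(s₂₃, s₂₄, s₃₄) ∈ {1,−1}³`
different from `(1,1,1)`, there is a vector `v ∈ ℝ⁴` such that the symmetric
4×4 matrix with entries `M_{ii} = v_i²`, `M_{1j} = v₁v_j` for `j = 2,3,4` and
`M_{ij} = s_{ij}v_iv_j` for `(i,j) ∈ {(2,3),(2,4),(3,4)}` has rank at least 3. -/
theorem scaled_veronese_high_rank (s23 s24 s34 : ℝ)
    (h23 : s23 = 1 ∨ s23 = -1) (h24 : s24 = 1 ∨ s24 = -1)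
    (h34 : s34 = 1 ∨ s34 = -1) (hne : ¬(s23 = 1 ∧ s24 = 1 ∧ s34 = 1)) :
    ∃ v : Fin 4 → ℝ,
      3 ≤ (Matrix.of
        ![![v 0 ^ 2, v 0 * v 1, v 0 * v 2, v 0 * v 3],
          ![v 0 * v 1, v 1 ^ 2, s23 * (v 1 * v 2), s24 * (v 1 * v 3)],
          ![v 0 * v 2, s23 * (v 1 * v 2), v 2 ^ 2, s34 * (v 2 * v 3)],
          ![v 0 * v 3, s24 * (v 1 * v 3), s34 * (v 2 * v 3), v 3 ^ 2]]).rank :=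
  scaled_veronese_high_rank_general s23 s24 s34 hne
end
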